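/- Let x₀,…,x₇ be real numbers and set X = x₀·u₀ + x₁·u₁ + x₂·u₂ + x₃·u₃ + x₄·u₄ + x₅·u₅ + x₆·u₆ + x₇·u₇ in Cl₄. Then X·reverse(X) = (x₀²+x₁²+x₂²+x₃²+x₄²+x₅²+x₆²+x₇²)·1 + (2x₀x₇ − 2x₁x₆ − 2x₂x₅ − 2x₃x₄)·u₇; in particular X·reverse(X) has no component on u₁,…,u₆. -/

import Mathlib

/-! Expand both factors in the basis, reduce every product of generators to an increasing word
using `eᵢ² = 1` and `eⱼeᵢ = -eᵢeⱼ`, and collect coefficients: the bivector parts of `X` and `X†`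
differ by a sign, so all cross terms with `u₁, …, u₆` cancel. -/

open CliffordAlgebra

/-- The positive-definite quadratic form `Q₄(v) = v₀² + v₁² + v₂² + v₃²` on `ℝ⁴`. -/
noncomputable def Q4 : QuadraticForm ℝ (Fin 4 → ℝ) :=
  QuadraticMap.weightedSumSquares ℝ (fun _ : Fin 4 => (1 : ℝ))

/-- The generators `e i` of the Clifford algebra `Cl₄ = Cl_{4,0}`. -/
noncomputable def e (i : Fin 4) : CliffordAlgebra Q4 :=
  CliffordAlgebra.ι Q4 (Pi.single i 1)

namespace QuadraticMap

variable {R ι : Type*} [CommRing R] [Fintype ι] [DecidableEq ι]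

theorem weightedSumSquares_single (w : ι → R) (i : ι) :
    weightedSumSquares R w (Pi.single i 1) = w i := by
  simp [weightedSumSquares_apply, Pi.single_apply]

theorem isOrtho_weightedSumSquares_single (w : ι → R) {i j : ι} (h : i ≠ j) :
    (weightedSumSquares R w).IsOrtho (Pi.single i 1) (Pi.single j 1) := by
  rw [isOrtho_def, weightedSumSquares_single, weightedSumSquares_single,
    weightedSumSquares_apply]
  simp [Pi.single_apply, mul_add, Finset.sum_add_distrib, h, h.symm]

end QuadraticMap

theorem e_mul_self (i : Fin 4) : e i * e i = 1 := by
  rw [e, ι_sq_scalar, Q4, QuadraticMap.weightedSumSquares_single, map_one]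

-- Oriented by `i < j` so that, used as a rewrite rule, it sorts words in the generators.
theorem e_mul_e_of_lt {i j : Fin 4} (h : i < j) : e j * e i = -(e i * e j) :=
  ι_mul_ι_comm_of_isOrtho (QuadraticMap.isOrtho_weightedSumSquares_single _ h.ne')

theorem e_mul_e_mul_self (i : Fin 4) (x : CliffordAlgebra Q4) : e i * (e i * x) = x := by
  rw [← mul_assoc, e_mul_self, one_mul]

theorem e_mul_e_mul_of_lt {i j : Fin 4} (h : i < j) (x : CliffordAlgebra Q4) :
    e j * (e i * x) = -(e i * (e j * x)) := by
  rw [← mul_assoc, e_mul_e_of_lt h, neg_mul, mul_assoc]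

theorem reverse_e (i : Fin 4) : reverse (e i) = e i := reverse_ι _

/-- `X·X†` has only a scalar part and a pseudoscalar (`u₇`) part:
`X·X† = (Σ xᵢ²)·1 + (2x₀x₇ − 2x₁x₆ − 2x₂x₅ − 2x₃x₄)·u₇`. -/
theorem mul_reverse_eq_scalar_add_pseudoscalar
    (x₀ x₁ x₂ x₃ x₄ x₅ x₆ x₇ : ℝ) :
    (x₀ • (1 : CliffordAlgebra Q4) + x₁ • (e 0 * e 1) + x₂ • (e 2 * e 0) +
      x₃ • (e 1 * e 2) + x₄ • (e 0 * e 3) + x₅ • (e 1 * e 3) + x₆ • (e 2 * e 3) +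
      x₇ • (e 0 * e 1 * e 2 * e 3)) * reverse (x₀ • (1 : CliffordAlgebra Q4) + x₁ • (e 0 * e 1) + x₂ • (e 2 * e 0) +
      x₃ • (e 1 * e 2) + x₄ • (e 0 * e 3) + x₅ • (e 1 * e 3) + x₆ • (e 2 * e 3) +
      x₇ • (e 0 * e 1 * e 2 * e 3)) =
      (x₀^2 + x₁^2 + x₂^2 + x₃^2 + x₄^2 + x₅^2 + x₆^2 + x₇^2) • (1 : CliffordAlgebra Q4) +
        (2*x₀*x₇ - 2*x₁*x₆ - 2*x₂*x₅ - 2*x₃*x₄) • (e 0 * e 1 * e 2 * e 3) := by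
  simp only [map_add, map_smul, reverse.map_mul, reverse_e, reverse.map_one]
  simp (disch := decide) only [mul_add, add_mul, smul_mul_assoc, mul_smul_comm, mul_one, one_mul,
    mul_assoc, e_mul_self, e_mul_e_mul_self, e_mul_e_of_lt, e_mul_e_mul_of_lt,
    mul_neg, neg_mul, smul_neg, neg_neg]
  module
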